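/- arXiv:2308.09321 — 4 statements merged into one kernel-verified Lean document; each statement's English description precedes it below -/
import Mathlib

section
/- Let d ≥ 1, let a_{−d},…,a_d ∈ ℂ with a_{−k} = conj(a_k) and a_d ≠ 0, let b : ℤ → ℝ be bounded, define L on ℓ²(ℤ,ℂ) by (Lu)(n) = Σ_{k=−d}^d a_k u(n+k) + b(n)u(n), and let E ∈ ℝ. If u, v ∈ ℓ²(ℤ,ℂ) satisfy Lu = Eu and Lv = Ev, then the vectors (ū(1), ū(0)) and (v̄(1), v̄(0)) in ℂ^{2d} are symplectically orthogonal with respect to S = [[0, −C*],[C, 0]]: explicitly, −ū(1)* C* v̄(0) + ū(0)* C v̄(1) = 0, where x* denotes the conjugate transpose. -/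
open scoped Real
open Filter Matrix

noncomputable section


/-- The vector `ū(m) = (u(md+d-1), u(md+d-2), …, u(md)) ∈ ℂ^d`. -/
def vecSeg (d : ℕ) (u : ℤ → ℂ) (m : ℤ) : Fin d → ℂ :=
  fun i => u (m * d + ((d : ℤ) - 1) - (i : ℕ))

/-- The `d × d` upper-triangular Toeplitz matrix with first row `(a d, a (d-1), …, a 1)`. -/
def toeplitzC (d : ℕ) (a : ℤ → ℂ) : Matrix (Fin d) (Fin d) ℂ :=
  fun i j => if (i : ℕ) ≤ (j : ℕ) then a ((d : ℤ) - (j : ℕ) + (i : ℕ)) else 0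

/-! The form `⟨u, L v⟩ - ⟨L u, v⟩` restricted to a half-line `n ≤ N` telescopes to a boundary
term `W(N)`, a discrete Wronskian that only involves `u` and `v` within distance `d` of `N`.
Since `L` is formally self-adjoint and `E`, `b` are real, `W(N + 1) - W(N)` is
`conj (u (N+1)) (L v - E v)(N+1) - conj ((L u - E u)(N+1)) v (N+1) = 0`, so `W` is constant;
as `u, v ∈ ℓ²` vanish at `+∞`, `W ≡ 0`. The left-hand side of the claim is `W(d - 1)`. -/

open Finset Topology

theorem sum_range_add_one_sub_sum_range {G : Type*} [AddCommGroup G] (f : ℤ → G) (N : ℤ)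
    (k : ℕ) :
    ∑ j ∈ range k, f (N + 1 - j) - ∑ j ∈ range k, f (N - j) = f (N + 1) - f (N + 1 - k) := by
  have htel := sum_range_sub' (fun j : ℕ => f (N + 1 - j)) k
  rw [Nat.cast_zero, sub_zero] at htel
  rw [← htel, ← sum_sub_distrib]
  refine sum_congr rfl fun j _ => ?_
  push_cast
  ring_nf

theorem sum_Icc_neg_natCast_eq {M : Type*} [AddCommMonoid M] (f : ℤ → M) (d : ℕ) :
    ∑ k ∈ Icc (-(d : ℤ)) d, f k = f 0 + ∑ k ∈ Icc 1 d, (f k + f (-k)) := by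
  induction d with
  | zero => simp
  | succ d ih =>
    have hIcc : Icc (-((d : ℤ) + 1)) (d + 1) =
        insert (-((d : ℤ) + 1)) (insert ((d : ℤ) + 1) (Icc (-(d : ℤ)) d)) := by
      ext x
      simp only [mem_Icc, mem_insert]
      omega
    rw [sum_Icc_succ_top (by omega), Nat.cast_succ, hIcc, sum_insert (by simp only [mem_insert, mem_Icc]; omega),
      sum_insert (by simp), ih]
    abel

theorem sum_Icc_neg_mul_of_conj_symm {d : ℕ} {a : ℤ → ℂ} (ha : ∀ k, a (-k) = star (a k))
    (u : ℤ → ℂ) (n : ℤ) :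
    ∑ k ∈ Icc (-(d : ℤ)) d, a k * u (n + k) =
      a 0 * u n + ∑ k ∈ Icc 1 d, (a k * u (n + k) + star (a k) * u (n - k)) := by
  rw [sum_Icc_neg_natCast_eq, add_zero]
  simp only [ha, ← sub_eq_add_neg]

theorem tendsto_atTop_zero_of_summable_norm_sq {x : ℤ → ℂ} (hx : Summable fun n => ‖x n‖ ^ 2) :
    Tendsto x atTop (𝓝 0) := by
  have hsq := (hx.tendsto_cofinite_zero.mono_left atTop_le_cofinite).sqrt
  simp only [Real.sqrt_sq (norm_nonneg _), Real.sqrt_zero] at hsq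
  exact tendsto_zero_iff_norm_tendsto_zero.mpr hsq

theorem Matrix.star_dotProduct_conjTranspose_mulVec {R m n : Type*} [CommSemiring R] [StarRing R]
    [Fintype m] [Fintype n] (A : Matrix m n R) (x : n → R) (y : m → R) :
    star x ⬝ᵥ (Aᴴ *ᵥ y) = star (star y ⬝ᵥ (A *ᵥ x)) := by
  rw [dotProduct_mulVec, vecMul_conjTranspose, star_star, star_dotProduct]

/-- `∑_{k=1}^d a k ∑_{N-k < n ≤ N} conj (u n) v (n + k)`: the terms of `⟨u, L v⟩` that couple
`n ≤ N` with `n + k > N`. -/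
def toeplitzPairing (d : ℕ) (a u v : ℤ → ℂ) (N : ℤ) : ℂ :=
  ∑ k ∈ Icc 1 d, ∑ j ∈ range k, a k * (star (u (N - j)) * v (N - j + k))

def wronskian (d : ℕ) (a u v : ℤ → ℂ) (N : ℤ) : ℂ :=
  toeplitzPairing d a u v N - star (toeplitzPairing d a v u N)

theorem toeplitzPairing_add_one_sub (d : ℕ) (a u v : ℤ → ℂ) (N : ℤ) :
    toeplitzPairing d a u v (N + 1) - toeplitzPairing d a u v N =
      ∑ k ∈ Icc 1 d,
        a k * (star (u (N + 1)) * v (N + 1 + k) - star (u (N + 1 - k)) * v (N + 1)) := by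
  rw [toeplitzPairing, toeplitzPairing, ← sum_sub_distrib]
  refine sum_congr rfl fun k _ => ?_
  rw [← mul_sum, ← mul_sum, ← mul_sub,
    sum_range_add_one_sub_sum_range (fun n => star (u n) * v (n + k)), sub_add_cancel]

theorem star_vecSeg_zero_dotProduct_toeplitzC_mulVec (d : ℕ) (a u v : ℤ → ℂ) :
    star (vecSeg d u 0) ⬝ᵥ (toeplitzC d a *ᵥ vecSeg d v 1) = toeplitzPairing d a u v (d - 1) := by
  simp only [dotProduct, mulVec, vecSeg, toeplitzC, Pi.star_apply, mul_sum, ite_mul, zero_mul,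
    ← sum_filter]
  rw [toeplitzPairing, sum_comm' (t' := range d) (s' := fun i => Ioc i d)
    (by intro k i; simp only [mem_Icc, mem_range, mem_Ioc]; omega), ← Fin.sum_univ_eq_sum_range]
  refine sum_congr rfl fun i _ => sum_nbij (fun j => d - j + i) ?_ ?_ ?_ ?_
  · intro j hj
    simp only [mem_filter, mem_univ, true_and, mem_Ioc] at hj ⊢
    omega
  · intro j₁ _ j₂ _ h
    simp only [Nat.add_right_cancel_iff] at h
    omega
  · intro k hk
    simp only [coe_Ioc, Set.mem_Ioc] at hk
    refine ⟨⟨d - k + i, by omega⟩, ?_, by dsimp only; omega⟩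
    simp only [mem_coe, mem_filter, mem_univ, true_and]
    omega
  · intro j _
    rw [Nat.cast_add, Nat.cast_sub j.isLt.le]
    ring_nf

section Wronskian

variable {d : ℕ} {a u v : ℤ → ℂ} {w : ℤ → ℝ}

theorem wronskian_add_one (ha : ∀ k, a (-k) = star (a k))
    (hu : ∀ n, ∑ k ∈ Icc (-(d : ℤ)) d, a k * u (n + k) = w n * u n)
    (hv : ∀ n, ∑ k ∈ Icc (-(d : ℤ)) d, a k * v (n + k) = w n * v n) (N : ℤ) :
    wronskian d a u v (N + 1) = wronskian d a u v N := by
  set M := N + 1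
  have ha0 : star (a 0) = a 0 := by rw [← ha, neg_zero]
  have huM := hu M
  have hvM := hv M
  rw [sum_Icc_neg_mul_of_conj_symm ha] at huM hvM
  rw [← sub_eq_zero]
  calc wronskian d a u v M - wronskian d a u v N
      = star (u M) * ∑ k ∈ Icc 1 d, (a k * v (M + k) + star (a k) * v (M - k))
        - v M * star (∑ k ∈ Icc 1 d, (a k * u (M + k) + star (a k) * u (M - k))) := by
        rw [wronskian, wronskian, sub_sub_sub_comm, ← star_sub, toeplitzPairing_add_one_sub,
          toeplitzPairing_add_one_sub, star_sum, star_sum, mul_sum, mul_sum, ← sum_sub_distrib,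
          ← sum_sub_distrib]
        refine sum_congr rfl fun k _ => ?_
        simp only [star_mul', star_sub, star_add, star_star]
        ring
    _ = 0 := by
        rw [eq_sub_of_add_eq' huM, eq_sub_of_add_eq' hvM]
        simp only [star_sub, star_mul', ha0, Complex.star_def, Complex.conj_ofReal]
        ring

theorem tendsto_wronskian_atTop (hu : Tendsto u atTop (𝓝 0)) (hv : Tendsto v atTop (𝓝 0)) :
    Tendsto (wronskian d a u v) atTop (𝓝 0) := by
  have hshift : ∀ {x : ℤ → ℂ} (c : ℤ), Tendsto x atTop (𝓝 0) →
      Tendsto (fun N => x (N + c)) atTop (𝓝 0) :=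
    fun c hx => hx.comp (tendsto_atTop_add_const_right _ c tendsto_id)
  have hpairing : ∀ {x y : ℤ → ℂ}, Tendsto x atTop (𝓝 0) → Tendsto y atTop (𝓝 0) →
      Tendsto (toeplitzPairing d a x y) atTop (𝓝 0) := by
    intro x y hx hy
    have hsum := tendsto_finsetSum (Icc 1 d) fun k _ => tendsto_finsetSum (range k) fun j _ =>
      (tendsto_const_nhds (x := a k)).mul ((hshift (-j) hx).star.mul (hshift (-j + k) hy))
    unfold toeplitzPairing
    simpa [sub_eq_add_neg, add_assoc] using hsum
  unfold wronskian
  simpa using (hpairing hu hv).sub (hpairing hv hu).star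

theorem wronskian_eq_zero (ha : ∀ k, a (-k) = star (a k))
    (hu : ∀ n, ∑ k ∈ Icc (-(d : ℤ)) d, a k * u (n + k) = w n * u n)
    (hv : ∀ n, ∑ k ∈ Icc (-(d : ℤ)) d, a k * v (n + k) = w n * v n)
    (hu₀ : Tendsto u atTop (𝓝 0)) (hv₀ : Tendsto v atTop (𝓝 0)) (N : ℤ) :
    wronskian d a u v N = 0 := by
  have hper : Function.Periodic (wronskian d a u v) 1 := wronskian_add_one ha hu hv
  have hconst : wronskian d a u v = fun _ => wronskian d a u v 0 := by
    ext n
    simpa using hper.int_mul_eq n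
  have hlim := tendsto_wronskian_atTop (d := d) (a := a) hu₀ hv₀
  rw [hconst] at hlim ⊢
  exact tendsto_nhds_unique tendsto_const_nhds hlim

end Wronskian

theorem statement3_general
    (d : ℕ) (a : ℤ → ℂ)
    (haconj : ∀ k : ℤ, a (-k) = star (a k))
    (b : ℤ → ℝ)
    (E : ℝ)
    (u v : ℤ → ℂ)
    (hu2 : Summable fun n : ℤ => ‖u n‖ ^ 2)
    (hv2 : Summable fun n : ℤ => ‖v n‖ ^ 2)
    (hLu : ∀ n : ℤ,
      (∑ k ∈ Finset.Icc (-(d:ℤ)) (d:ℤ), a k * u (n + k)) + (b n : ℂ) * u n = (E : ℂ) * u n)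
    (hLv : ∀ n : ℤ,
      (∑ k ∈ Finset.Icc (-(d:ℤ)) (d:ℤ), a k * v (n + k)) + (b n : ℂ) * v n = (E : ℂ) * v n) :
    -(star (vecSeg d u 1) ⬝ᵥ ((toeplitzC d a)ᴴ *ᵥ vecSeg d v 0))
      + (star (vecSeg d u 0) ⬝ᵥ (toeplitzC d a *ᵥ vecSeg d v 1)) = 0 := by
  have heigen : ∀ x : ℤ → ℂ,
      (∀ n, (∑ k ∈ Icc (-(d : ℤ)) d, a k * x (n + k)) + (b n : ℂ) * x n = (E : ℂ) * x n) →
        ∀ n, ∑ k ∈ Icc (-(d : ℤ)) d, a k * x (n + k) = ((E - b n : ℝ) : ℂ) * x n :=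
    fun x hx n => by push_cast; linear_combination hx n
  have hW := wronskian_eq_zero haconj (heigen u hLu) (heigen v hLv)
    (tendsto_atTop_zero_of_summable_norm_sq hu2) (tendsto_atTop_zero_of_summable_norm_sq hv2)
    (d - 1)
  rw [star_dotProduct_conjTranspose_mulVec, star_vecSeg_zero_dotProduct_toeplitzC_mulVec,
    star_vecSeg_zero_dotProduct_toeplitzC_mulVec]
  rw [wronskian] at hW
  linear_combination hW

/-- symplectic orthogonality of eigenfunctions.
For the finite-range operator `(Lu)(n) = Σ_{k=-d}^d a_k u(n+k) + b(n) u(n)` with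
`a_{-k} = conj (a_k)`, `a_d ≠ 0`, `b` real bounded and `E` real, any two `ℓ²`
eigenfunctions `u, v` with eigenvalue `E` satisfy
`-ū(1)* C* v̄(0) + ū(0)* C v̄(1) = 0`. -/
theorem statement3
    (d : ℕ) (hd : 1 ≤ d) (a : ℤ → ℂ)
    (haconj : ∀ k : ℤ, a (-k) = star (a k)) (had : a (d : ℤ) ≠ 0)
    (b : ℤ → ℝ) (hb : ∃ Cb : ℝ, ∀ n : ℤ, |b n| ≤ Cb)
    (E : ℝ)
    (u v : ℤ → ℂ)
    (hu2 : Summable fun n : ℤ => ‖u n‖ ^ 2)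
    (hv2 : Summable fun n : ℤ => ‖v n‖ ^ 2)
    (hLu : ∀ n : ℤ,
      (∑ k ∈ Finset.Icc (-(d:ℤ)) (d:ℤ), a k * u (n + k)) + (b n : ℂ) * u n = (E : ℂ) * u n)
    (hLv : ∀ n : ℤ,
      (∑ k ∈ Finset.Icc (-(d:ℤ)) (d:ℤ), a k * v (n + k)) + (b n : ℂ) * v n = (E : ℂ) * v n) :
    -(star (vecSeg d u 1) ⬝ᵥ ((toeplitzC d a)ᴴ *ᵥ vecSeg d v 0))
      + (star (vecSeg d u 0) ⬝ᵥ (toeplitzC d a *ᵥ vecSeg d v 1)) = 0 :=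
  statement3_general d a haconj b E u v hu2 hv2 hLu hLv
end
end

section
/- Let α ∈ ℝ be irrational with continued-fraction denominators (q_m), and fix n with q_{n+1} > 100 q_n. Then every integer k with 0 < |k| < q_{n+1}/6 that is not an integer multiple of q_n satisfies ‖kα‖_{ℝ/ℤ} ≥ 1/(4q_n). -/
/-! If `p/q` is a reduced fraction, then for every `k` not divisible by `q` the integer
`q · round (kα) - k p` is nonzero, and it equals `q (round (kα) - kα) + k (qα - p)`; hence
`q ‖kα‖ ≥ 1 - |k| |qα - p|`. The convergents `p_n/q_n` of `α` are reduced (determinant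
identity) and satisfy `|q_n α - p_n| ≤ 1/q_{n+1}`, so `|k| < q_{n+1}/6` forces
`q_n ‖kα‖ ≥ 5/6`. -/

open scoped Real
open Filter Matrix

noncomputable section

/-- The denominators `q_n` of the continued fraction approximants of `α`. -/
def cfDen (α : ℝ) (n : ℕ) : ℝ := (GenContFract.of α).dens n


/-- `‖x‖_{ℝ/ℤ}`: the distance from `x` to the nearest integer. -/
def distZ (x : ℝ) : ℝ := |x - round x|

namespace GenContFract

variable {K : Type*} [Field K] [LinearOrder K] [FloorRing K] {v : K}

theorem contsAux_mem_bot (m : ℕ) :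
    ((GenContFract.of v).contsAux m).a ∈ (⊥ : Subring K) ∧
      ((GenContFract.of v).contsAux m).b ∈ (⊥ : Subring K) := by
  induction m using Nat.twoStepInduction with
  | zero => simp [zeroth_contAux_eq_one_zero, one_mem]
  | one => simp [of_h_eq_floor]
  | more m ih₀ ih₁ =>
    rcases h : (GenContFract.of v).s.get? m with _ | gp
    · rwa [contsAux_stable_step_of_terminated h]
    · obtain ⟨hgp_a, z, hgp_b⟩ := of_partNum_eq_one_and_exists_int_partDen_eq h
      have hz : gp.b ∈ (⊥ : Subring K) := Subring.mem_bot.mpr ⟨z, hgp_b.symm⟩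
      rw [contsAux_recurrence h rfl rfl, hgp_a, one_mul, one_mul]
      exact ⟨add_mem (mul_mem hz ih₁.1) ih₀.1, add_mem (mul_mem hz ih₁.2) ih₀.2⟩

theorem exists_int_eq_num (n : ℕ) : ∃ p : ℤ, (GenContFract.of v).nums n = p :=
  (Subring.mem_bot.mp (contsAux_mem_bot (n + 1)).1).imp fun _ h ↦ h.symm

theorem exists_int_eq_den (n : ℕ) : ∃ q : ℤ, (GenContFract.of v).dens n = q :=
  (Subring.mem_bot.mp (contsAux_mem_bot (n + 1)).2).imp fun _ h ↦ h.symm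

variable {n : ℕ}

theorem exists_isCoprime_int_eq_den_num (h : ¬(GenContFract.of v).TerminatedAt n) :
    ∃ q p : ℤ, IsCoprime q p ∧
      (GenContFract.of v).dens n = q ∧ (GenContFract.of v).nums n = p := by
  obtain ⟨p, hp⟩ := exists_int_eq_num (v := v) n
  obtain ⟨q, hq⟩ := exists_int_eq_den (v := v) n
  obtain ⟨P, hP⟩ := exists_int_eq_num (v := v) (n + 1)
  obtain ⟨Q, hQ⟩ := exists_int_eq_den (v := v) (n + 1)
  have hdet : p * Q - q * P = (-1) ^ (n + 1) := by
    have := SimpContFract.determinant (s := SimpContFract.of v) h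
    simp only [SimpContFract.of, hp, hq, hP, hQ] at this
    exact_mod_cast this
  have hsq : ((-1 : ℤ) ^ (n + 1)) * (-1) ^ (n + 1) = 1 := by
    rw [← mul_pow, neg_one_mul, neg_neg, one_pow]
  refine ⟨q, p, ⟨-(P * (-1) ^ (n + 1)), Q * (-1) ^ (n + 1), ?_⟩, hq, hp⟩
  linear_combination (-1) ^ (n + 1) * hdet + hsq

variable [IsStrictOrderedRing K]

theorem den_pos (h : ¬(GenContFract.of v).TerminatedAt n) : 0 < (GenContFract.of v).dens n := by
  have hfib := succ_nth_fib_le_of_nth_den (v := v) (n := n)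
    (Or.inr fun h' ↦ h (terminated_stable (n.sub_le 1) h'))
  have : (0 : K) < Nat.fib (n + 1) := by exact_mod_cast Nat.fib_pos.mpr n.succ_pos
  exact this.trans_le hfib

theorem abs_den_mul_sub_num_le (h : ¬(GenContFract.of v).TerminatedAt n) :
    |(GenContFract.of v).dens n * v - (GenContFract.of v).nums n| ≤
      1 / (GenContFract.of v).dens (n + 1) := by
  set q := (GenContFract.of v).dens n
  have hq : 0 < q := den_pos h
  have happrox := abs_sub_convs_le h
  rw [conv_eq_num_div_den] at happrox
  calc |q * v - (GenContFract.of v).nums n| = q * |v - (GenContFract.of v).nums n / q| := by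
        rw [← abs_of_pos hq, ← abs_mul, abs_of_pos hq, mul_sub, mul_div_cancel₀ _ hq.ne']
    _ ≤ q * (1 / (q * (GenContFract.of v).dens (n + 1))) := by gcongr
    _ = 1 / (GenContFract.of v).dens (n + 1) := by field_simp

end GenContFract

theorem GenContFract.not_terminatedAt_of_irrational {α : ℝ} (hα : Irrational α) (n : ℕ) :
    ¬(GenContFract.of α).TerminatedAt n := fun h ↦ by
  obtain ⟨q, hq⟩ := (GenContFract.terminates_iff_rat α).mp ⟨n, h⟩
  exact hα ⟨q, hq.symm⟩

theorem one_sub_abs_mul_le_abs_mul_distZ {α : ℝ} {q p k : ℤ} (hqp : IsCoprime q p)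
    (hqk : ¬q ∣ k) : 1 - |(k : ℝ)| * |q * α - p| ≤ |(q : ℝ)| * distZ (k * α) := by
  set r := round ((k : ℝ) * α)
  have hD : r * q - k * p ≠ 0 := fun h ↦
    hqk (hqp.dvd_of_dvd_mul_right ⟨r, by linear_combination -h⟩)
  have hD1 : (1 : ℝ) ≤ |((r * q - k * p : ℤ) : ℝ)| := by
    exact_mod_cast Int.one_le_abs hD
  have hsplit : ((r * q - k * p : ℤ) : ℝ) = q * (r - k * α) + k * (q * α - p) := by
    push_cast; ring
  have htri := abs_add_le ((q : ℝ) * (r - k * α)) (k * (q * α - p))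
  rw [abs_mul, abs_mul, abs_sub_comm, ← hsplit] at htri
  rw [distZ]
  linarith

theorem statement9_general
    (α : ℝ) (hα : Irrational α) (n : ℕ)
    (k : ℤ) (hklt : |(k : ℝ)| < cfDen α (n + 1) / 6)
    (hkq : ∀ m : ℤ, (k : ℝ) ≠ (m : ℝ) * cfDen α n) :
    1 / (4 * cfDen α n) ≤ distZ ((k : ℝ) * α) := by
  have hα' := GenContFract.not_terminatedAt_of_irrational hα n
  obtain ⟨q, p, hqp, hq, hp⟩ := GenContFract.exists_isCoprime_int_eq_den_num hα'
  have hq_pos : (0 : ℝ) < q := hq ▸ GenContFract.den_pos hα'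
  have happrox : |q * α - p| ≤ 1 / cfDen α (n + 1) :=
    hq ▸ hp ▸ GenContFract.abs_den_mul_sub_num_le hα'
  have hqk : ¬q ∣ k := by
    rintro ⟨m, rfl⟩
    exact hkq m (by rw [cfDen, hq]; push_cast; ring)
  have hsmall : |(k : ℝ)| * |q * α - p| ≤ 1 / 6 := by
    have hQ_pos : 0 < cfDen α (n + 1) := by linarith [abs_nonneg (k : ℝ)]
    calc |(k : ℝ)| * |q * α - p| ≤ cfDen α (n + 1) / 6 * (1 / cfDen α (n + 1)) := by gcongr
      _ = 1 / 6 := by field_simp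
  have key := one_sub_abs_mul_le_abs_mul_distZ (α := α) hqp hqk
  rw [abs_of_pos hq_pos] at key
  rw [cfDen, hq, div_le_iff₀ (by positivity)]
  nlinarith

/-- If `q_{n+1} > 100 q_n`, then every integer `k` with
`0 < |k| < q_{n+1}/6` that is not an integer multiple of `q_n` satisfies
`‖kα‖_{ℝ/ℤ} ≥ 1/(4 q_n)`. -/
theorem statement9
    (α : ℝ) (hα : Irrational α) (n : ℕ)
    (hq : 100 * cfDen α n < cfDen α (n + 1))
    (k : ℤ) (hk0 : k ≠ 0) (hklt : |(k : ℝ)| < cfDen α (n + 1) / 6)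
    (hkq : ∀ m : ℤ, (k : ℝ) ≠ (m : ℝ) * cfDen α n) :
    1 / (4 * cfDen α n) ≤ distZ ((k : ℝ) * α) :=
  statement9_general α hα n k hklt hkq
end
end

section
/- Let d ≥ 1, C ∈ M_d(ℂ), z ∈ ℂ, and let (B_n)_{n≥1} be Hermitian matrices in M_d(ℂ). Let (ū_n)_{n≥0} be a sequence in ℂ^d with Σ_{n≥0} ‖ū_n‖² < ∞ satisfying C·ū_{n+1} + B_n·ū_n + C*·ū_{n−1} = z·ū_n for all n ≥ 1. Then Im(ū₀* C ū₁) = −Im(z) · Σ_{n=1}^∞ ‖ū_n‖². -/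
/-!
The quantity `w n = Im (u n* C u (n+1))` is a Wronskian-type invariant of the recurrence:
pairing the equation at `n + 1` with `u (n+1)` and taking imaginary parts kills the Hermitian
term `B (n+1)` and turns the `Cᴴ` term into `-w n`, so `w (n+1) - w n = Im z * ‖u (n+1)‖²`.
Telescoping, `w N = w 0 + Im z * ∑_{k<N} ‖u (k+1)‖²`, and `w N → 0` because square
summability forces `u n → 0`.
-/

open Filter Matrix Topology

section DotProduct

variable {ι : Type*} [Fintype ι]

lemma Matrix.im_star_dotProduct_conjTranspose_mulVec (A : Matrix ι ι ℂ) (x y : ι → ℂ) :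
    (star x ⬝ᵥ (Aᴴ *ᵥ y)).im = -(star y ⬝ᵥ (A *ᵥ x)).im := by
  rw [dotProduct_mulVec, ← star_mulVec, star_dotProduct]
  simp

lemma Matrix.star_dotProduct_self_eq_sum_norm_sq (x : ι → ℂ) :
    star x ⬝ᵥ x = ((∑ i, ‖x i‖ ^ 2 : ℝ) : ℂ) := by
  simp [dotProduct, Complex.conj_mul']

lemma Matrix.im_star_dotProduct_smul_self (z : ℂ) (x : ι → ℂ) :
    (star x ⬝ᵥ (z • x)).im = z.im * ∑ i, ‖x i‖ ^ 2 := by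
  rw [dotProduct_smul, star_dotProduct_self_eq_sum_norm_sq, smul_eq_mul, Complex.mul_im,
    Complex.ofReal_im, Complex.ofReal_re, mul_zero, zero_add]

end DotProduct

lemma tendsto_zero_of_summable_sum_norm_sq {ι : Type*} [Fintype ι] {u : ℕ → ι → ℂ}
    (hsum : Summable fun n => ∑ i, ‖u n i‖ ^ 2) : Tendsto u atTop (𝓝 0) := by
  refine tendsto_pi_nhds.2 fun i => tendsto_zero_iff_norm_tendsto_zero.2 ?_
  have hsq : Tendsto (fun n => ‖u n i‖ ^ 2) atTop (𝓝 0) :=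
    squeeze_zero (fun _ => by positivity)
      (fun n => Finset.single_le_sum (f := fun j => ‖u n j‖ ^ 2) (fun _ _ => by positivity)
        (Finset.mem_univ i))
      hsum.tendsto_atTop_zero
  simpa using hsq.sqrt

section Wronskian

variable {ι : Type*} [Fintype ι] (C : Matrix ι ι ℂ) (u : ℕ → ι → ℂ)

def imWronskian (n : ℕ) : ℝ := (star (u n) ⬝ᵥ (C *ᵥ u (n + 1))).im

lemma imWronskian_succ {B : Matrix ι ι ℂ} (hB : B.IsHermitian) {z : ℂ} {n : ℕ}
    (h : C *ᵥ u (n + 2) + B *ᵥ u (n + 1) + Cᴴ *ᵥ u n = z • u (n + 1)) :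
    imWronskian C u (n + 1) = imWronskian C u n + z.im * ∑ i, ‖u (n + 1) i‖ ^ 2 := by
  have him := congrArg (fun v => (star (u (n + 1)) ⬝ᵥ v).im) h
  have hB0 : (star (u (n + 1)) ⬝ᵥ (B *ᵥ u (n + 1))).im = 0 :=
    hB.im_star_dotProduct_mulVec_self _
  simp only [dotProduct_add, Complex.add_im, hB0, im_star_dotProduct_conjTranspose_mulVec,
    im_star_dotProduct_smul_self] at him
  unfold imWronskian
  linarith

lemma imWronskian_eq_add_sum {B : ℕ → Matrix ι ι ℂ} (hB : ∀ n, 1 ≤ n → (B n).IsHermitian)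
    {z : ℂ} (heq : ∀ n, 1 ≤ n → C *ᵥ u (n + 1) + B n *ᵥ u n + Cᴴ *ᵥ u (n - 1) = z • u n)
    (N : ℕ) :
    imWronskian C u N =
      imWronskian C u 0 + z.im * ∑ k ∈ Finset.range N, ∑ i, ‖u (k + 1) i‖ ^ 2 := by
  induction N with
  | zero => simp
  | succ N ih =>
    rw [imWronskian_succ C u (hB (N + 1) (by omega)) (heq (N + 1) (by omega)), ih,
      Finset.sum_range_succ]
    ring

lemma tendsto_imWronskian_zero (hu : Tendsto u atTop (𝓝 0)) :
    Tendsto (imWronskian C u) atTop (𝓝 0) := by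
  have hcont : Continuous fun p : (ι → ℂ) × (ι → ℂ) => (star p.1 ⬝ᵥ (C *ᵥ p.2)).im := by
    fun_prop
  have h := (hcont.tendsto (0, 0)).comp (hu.prodMk_nhds (hu.comp (tendsto_add_atTop_nat 1)))
  simp only [star_zero, zero_dotProduct, Complex.zero_im] at h
  exact h

end Wronskian

theorem statement13_general
    (d : ℕ) (C : Matrix (Fin d) (Fin d) ℂ) (z : ℂ)
    (B : ℕ → Matrix (Fin d) (Fin d) ℂ) (hB : ∀ n : ℕ, 1 ≤ n → (B n).IsHermitian)
    (u : ℕ → Fin d → ℂ)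
    (hsum : Summable (fun n : ℕ => ∑ i, ‖u n i‖ ^ 2))
    (heq : ∀ n : ℕ, 1 ≤ n →
      C *ᵥ u (n + 1) + B n *ᵥ u n + Cᴴ *ᵥ u (n - 1) = z • u n) :
    (star (u 0) ⬝ᵥ (C *ᵥ u 1)).im = - z.im * ∑' n : ℕ, ∑ i, ‖u (n + 1) i‖ ^ 2 := by
  have hshift : Summable fun n => ∑ i, ‖u (n + 1) i‖ ^ 2 :=
    (summable_nat_add_iff (f := fun n => ∑ i, ‖u n i‖ ^ 2) 1).2 hsum
  have hlim : Tendsto (imWronskian C u) atTop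
      (𝓝 (imWronskian C u 0 + z.im * ∑' n, ∑ i, ‖u (n + 1) i‖ ^ 2)) := by
    refine Tendsto.congr (fun N => (imWronskian_eq_add_sum C u hB heq N).symm) ?_
    exact tendsto_const_nhds.add (hshift.hasSum.tendsto_sum_nat.const_mul z.im)
  have hzero := tendsto_nhds_unique hlim
    (tendsto_imWronskian_zero C u (tendsto_zero_of_summable_sum_norm_sq hsum))
  unfold imWronskian at hzero
  linarith

/-- imaginary-part Wronskian identity for square-summable solutions of a
block Jacobi eigenvalue equation. -/
theorem statement13
    (d : ℕ) (hd : 1 ≤ d) (C : Matrix (Fin d) (Fin d) ℂ) (z : ℂ)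
    (B : ℕ → Matrix (Fin d) (Fin d) ℂ) (hB : ∀ n : ℕ, 1 ≤ n → (B n).IsHermitian)
    (u : ℕ → Fin d → ℂ)
    (hsum : Summable (fun n : ℕ => ∑ i, ‖u n i‖ ^ 2))
    (heq : ∀ n : ℕ, 1 ≤ n →
      C *ᵥ u (n + 1) + B n *ᵥ u n + Cᴴ *ᵥ u (n - 1) = z • u n) :
    (star (u 0) ⬝ᵥ (C *ᵥ u 1)).im = - z.im * ∑' n : ℕ, ∑ i, ‖u (n + 1) i‖ ^ 2 :=
  statement13_general d C z B hB u hsum heq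
end

section
/- Let (M_n)_{n∈ℤ} be invertible matrices in GL(2d,ℂ) with iterates M^{(m)}_n = M_{n+m−1}⋯M_n, admitting a splitting ℂ^{2d} = E^s_n ⊕ E^c_n ⊕ E^u_n with M_n E^∗_n = E^∗_{n+1} for ∗ = s,c,u, and constants C₀ ≥ 1, δ > δ′ > 0 such that for all n ∈ ℤ, m ≥ 1 and unit vectors ξ: ‖(M^{(m)}_{n−m})^{-1}ξ‖ ≥ C₀^{-1}e^{δm} if ξ ∈ E^s_n; ‖M^{(m)}_n ξ‖ ≥ C₀^{-1}e^{δm} if ξ ∈ E^u_n; ‖M^{(m)}_n ξ‖ ≤ C₀e^{δ′m} and ‖(M^{(m)}_{n−m})^{-1}ξ‖ ≤ C₀e^{δ′m} if ξ ∈ E^c_n. Let x ∈ ℂ^{2d} with decomposition x = x^s + x^c + x^u (x^∗ ∈ E^∗_0), and suppose that for some m ≥ 1 both ‖M^{(m)}_0 x‖ ≤ C₀e^{δ′m} and ‖(M^{(m)}_{−m})^{-1}x‖ ≤ C₀e^{δ′m}. Then ‖x^s‖ ≤ C₀²(1 + ‖x^c‖ + ‖x^u‖)e^{−(δ−δ′)m}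 and ‖x^u‖ ≤ C₀²(1 + ‖x^c‖ + ‖x^s‖)e^{−(δ−δ′)m}. -/
open scoped Real
open Filter Matrix

noncomputable section

/-- A complex matrix acting as a linear map on the corresponding Euclidean space. -/
def matL {ι : Type*} [Fintype ι] [DecidableEq ι] (A : Matrix ι ι ℂ) :
    EuclideanSpace ℂ ι →ₗ[ℂ] EuclideanSpace ℂ ι :=
  (WithLp.linearEquiv 2 ℂ (ι → ℂ)).symm.toLinearMap ∘ₗ A.mulVecLin ∘ₗ
    (WithLp.linearEquiv 2 ℂ (ι → ℂ)).toLinearMap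

/-- Iterates `M^{(m)}_n = M_{n+m-1} ⋯ M_n` of a sequence of matrices over ℤ. -/
def iterZ {N : ℕ} (M : ℤ → Matrix (Fin N) (Fin N) ℂ) : ℤ → ℕ → Matrix (Fin N) (Fin N) ℂ
  | _, 0 => 1
  | n, m+1 => M (n + m) * iterZ M n m


namespace S14Aux

lemma matL_mul {ι : Type*} [Fintype ι] [DecidableEq ι] (A B : Matrix ι ι ℂ) :
    matL (A * B) = (matL A).comp (matL B) := by
  unfold matL
  rw [Matrix.mulVecLin_mul]
  rfl

lemma matL_one {ι : Type*} [Fintype ι] [DecidableEq ι] :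
    matL (1 : Matrix ι ι ℂ) = LinearMap.id := by
  unfold matL
  rw [Matrix.mulVecLin_one]
  rfl

lemma iterZ_succ {N : ℕ} (M : ℤ → Matrix (Fin N) (Fin N) ℂ) (n : ℤ) (m : ℕ) :
    iterZ M n (m+1) = M (n + m) * iterZ M n m := rfl

lemma iterZ_det {N : ℕ} (M : ℤ → Matrix (Fin N) (Fin N) ℂ)
    (hM : ∀ n : ℤ, IsUnit (M n).det) (n : ℤ) (m : ℕ) :
    IsUnit (iterZ M n m).det := by
  induction m with
  | zero => simp [iterZ]
  | succ m ih =>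
    rw [iterZ_succ, Matrix.det_mul]
    exact (hM _).mul ih

lemma matL_inv_apply {ι : Type*} [Fintype ι] [DecidableEq ι] (A : Matrix ι ι ℂ)
    (h : IsUnit A.det) (v : EuclideanSpace ℂ ι) :
    matL A⁻¹ (matL A v) = v := by
  rw [← LinearMap.comp_apply, ← matL_mul, Matrix.nonsing_inv_mul A h, matL_one,
    LinearMap.id_apply]

lemma map_iterZ {N : ℕ} (M : ℤ → Matrix (Fin N) (Fin N) ℂ)
    (E : ℤ → Submodule ℂ (EuclideanSpace ℂ (Fin N)))
    (hE : ∀ n : ℤ, (E n).map (matL (M n)) = E (n + 1)) (n : ℤ) (m : ℕ) :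
    (E n).map (matL (iterZ M n m)) = E (n + m) := by
  induction m with
  | zero => simp [iterZ, matL_one]
  | succ m ih =>
    rw [iterZ_succ, matL_mul, Submodule.map_comp, ih, hE (n + m)]
    congr 1
    push_cast
    ring

lemma lower_scaled {V : Type*} [NormedAddCommGroup V] [NormedSpace ℂ V]
    (f : V →ₗ[ℂ] V) (c : ℝ) (hc : 0 ≤ c) {p : Submodule ℂ V} {v : V} (hv : v ∈ p)
    (h : ∀ ξ : V, ‖ξ‖ = 1 → ξ ∈ p → c ≤ ‖f ξ‖) : c * ‖v‖ ≤ ‖f v‖ := by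
  rcases eq_or_ne v 0 with rfl | hv0
  · simp
  · have hnv : (0:ℝ) < ‖v‖ := norm_pos_iff.mpr hv0
    have hmem : ((‖v‖⁻¹ : ℝ) : ℂ) • v ∈ p := p.smul_mem _ hv
    have hunit : ‖((‖v‖⁻¹ : ℝ) : ℂ) • v‖ = 1 := by
      rw [norm_smul, Complex.norm_real, Real.norm_eq_abs, abs_of_pos (inv_pos.mpr hnv)]
      field_simp
    have key := h _ hunit hmem
    rw [_root_.map_smul, norm_smul, Complex.norm_real, Real.norm_eq_abs,
      abs_of_pos (inv_pos.mpr hnv)] at key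
    calc c * ‖v‖ ≤ (‖v‖⁻¹ * ‖f v‖) * ‖v‖ := by nlinarith
    _ = ‖f v‖ := by field_simp

lemma upper_scaled {V : Type*} [NormedAddCommGroup V] [NormedSpace ℂ V]
    (f : V →ₗ[ℂ] V) (c : ℝ) (hc : 0 ≤ c) {p : Submodule ℂ V} {v : V} (hv : v ∈ p)
    (h : ∀ ξ : V, ‖ξ‖ = 1 → ξ ∈ p → ‖f ξ‖ ≤ c) : ‖f v‖ ≤ c * ‖v‖ := by
  rcases eq_or_ne v 0 with rfl | hv0
  · simp
  · have hnv : (0:ℝ) < ‖v‖ := norm_pos_iff.mpr hv0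
    have hmem : ((‖v‖⁻¹ : ℝ) : ℂ) • v ∈ p := p.smul_mem _ hv
    have hunit : ‖((‖v‖⁻¹ : ℝ) : ℂ) • v‖ = 1 := by
      rw [norm_smul, Complex.norm_real, Real.norm_eq_abs, abs_of_pos (inv_pos.mpr hnv)]
      field_simp
    have key := h _ hunit hmem
    rw [_root_.map_smul, norm_smul, Complex.norm_real, Real.norm_eq_abs,
      abs_of_pos (inv_pos.mpr hnv)] at key
    calc ‖f v‖ = (‖v‖⁻¹ * ‖f v‖) * ‖v‖ := by field_simp
    _ ≤ c * ‖v‖ := by nlinarith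

end S14Aux

/-- appendix lemma: components of slowly growing vectors lie mostly in
the center. -/
theorem statement14
    (d : ℕ) (hd : 1 ≤ d)
    (M : ℤ → Matrix (Fin (2*d)) (Fin (2*d)) ℂ) (hM : ∀ n : ℤ, IsUnit (M n).det)
    (Es Ec Eu : ℤ → Submodule ℂ (EuclideanSpace ℂ (Fin (2*d))))
    (hsplit : ∀ n : ℤ, DirectSum.IsInternal (![Es n, Ec n, Eu n]))
    (hinvs : ∀ n : ℤ, (Es n).map (matL (M n)) = Es (n + 1))
    (hinvc : ∀ n : ℤ, (Ec n).map (matL (M n)) = Ec (n + 1))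
    (hinvu : ∀ n : ℤ, (Eu n).map (matL (M n)) = Eu (n + 1))
    (C₀ δ δ' : ℝ) (hC₀ : 1 ≤ C₀) (hδ' : 0 < δ') (hδ : δ' < δ)
    (hbd : ∀ n : ℤ, ∀ m : ℕ, 1 ≤ m → ∀ ξ : EuclideanSpace ℂ (Fin (2*d)), ‖ξ‖ = 1 →
      (ξ ∈ Es n → C₀⁻¹ * Real.exp (δ * m) ≤ ‖matL ((iterZ M (n - m) m)⁻¹) ξ‖) ∧
      (ξ ∈ Eu n → C₀⁻¹ * Real.exp (δ * m) ≤ ‖matL (iterZ M n m) ξ‖) ∧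
      (ξ ∈ Ec n →
        ‖matL (iterZ M n m) ξ‖ ≤ C₀ * Real.exp (δ' * m) ∧
        ‖matL ((iterZ M (n - m) m)⁻¹) ξ‖ ≤ C₀ * Real.exp (δ' * m)))
    (x xs xc xu : EuclideanSpace ℂ (Fin (2*d)))
    (hxs : xs ∈ Es 0) (hxc : xc ∈ Ec 0) (hxu : xu ∈ Eu 0)
    (hx : x = xs + xc + xu)
    (m : ℕ) (hm : 1 ≤ m)
    (hfwd : ‖matL (iterZ M 0 m) x‖ ≤ C₀ * Real.exp (δ' * m))
    (hbwd : ‖matL ((iterZ M (0 - (m : ℤ)) m)⁻¹) x‖ ≤ C₀ * Real.exp (δ' * m)) :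
    ‖xs‖ ≤ C₀ ^ 2 * (1 + ‖xc‖ + ‖xu‖) * Real.exp (-(δ - δ') * m) ∧
    ‖xu‖ ≤ C₀ ^ 2 * (1 + ‖xc‖ + ‖xs‖) * Real.exp (-(δ - δ') * m) := by
  have hm1 : (1:ℝ) ≤ (m:ℝ) := by exact_mod_cast hm
  have hC₀pos : (0:ℝ) < C₀ := lt_of_lt_of_le one_pos hC₀
  have hEpos : (0:ℝ) < Real.exp (δ * m) := Real.exp_pos _
  have hE'pos : (0:ℝ) < Real.exp (δ' * m) := Real.exp_pos _
  have hclow : (0:ℝ) ≤ C₀⁻¹ * Real.exp (δ * m) := by positivity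
  have hcup : (0:ℝ) ≤ C₀ * Real.exp (δ' * m) := by positivity
  have hEinv : (Real.exp (δ * m))⁻¹ ≤ Real.exp (δ' * m) := by
    rw [← Real.exp_neg]
    apply Real.exp_le_exp.mpr
    nlinarith [hδ'.le, (hδ'.trans hδ).le]
  -- center bounds
  have hAxc : ‖matL (iterZ M 0 m) xc‖ ≤ (C₀ * Real.exp (δ' * m)) * ‖xc‖ :=
    S14Aux.upper_scaled _ _ hcup hxc (fun ξ h1 h2 => ((hbd 0 m hm ξ h1).2.2 h2).1)
  have hBxc : ‖matL ((iterZ M (0 - (m:ℤ)) m)⁻¹) xc‖ ≤ (C₀ * Real.exp (δ' * m)) * ‖xc‖ :=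
    S14Aux.upper_scaled _ _ hcup hxc (fun ξ h1 h2 => ((hbd 0 m hm ξ h1).2.2 h2).2)
  -- expansion bounds
  have hAxu : (C₀⁻¹ * Real.exp (δ * m)) * ‖xu‖ ≤ ‖matL (iterZ M 0 m) xu‖ :=
    S14Aux.lower_scaled _ _ hclow hxu (fun ξ h1 h2 => (hbd 0 m hm ξ h1).2.1 h2)
  have hBxs : (C₀⁻¹ * Real.exp (δ * m)) * ‖xs‖ ≤ ‖matL ((iterZ M (0 - (m:ℤ)) m)⁻¹) xs‖ :=
    S14Aux.lower_scaled _ _ hclow hxs (fun ξ h1 h2 => (hbd 0 m hm ξ h1).1 h2)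
  -- forward contraction of xs
  have hAdet := S14Aux.iterZ_det M hM 0 m
  have hmemA : matL (iterZ M 0 m) xs ∈ Es ((m:ℕ) : ℤ) := by
    have h := S14Aux.map_iterZ M Es hinvs 0 m
    rw [zero_add] at h
    rw [← h]
    exact Submodule.mem_map_of_mem hxs
  have hAxs : ‖matL (iterZ M 0 m) xs‖ ≤ (C₀ * (Real.exp (δ * m))⁻¹) * ‖xs‖ := by
    have h := S14Aux.lower_scaled (matL ((iterZ M (((m:ℕ):ℤ) - (m:ℕ)) m)⁻¹))
      (C₀⁻¹ * Real.exp (δ * m)) hclow hmemA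
      (fun ξ h1 h2 => (hbd ((m:ℕ):ℤ) m hm ξ h1).1 h2)
    rw [sub_self, S14Aux.matL_inv_apply _ hAdet] at h
    have h2 := mul_le_mul_of_nonneg_left h
      (by positivity : (0:ℝ) ≤ C₀ * (Real.exp (δ * m))⁻¹)
    calc ‖matL (iterZ M 0 m) xs‖
        = (C₀ * (Real.exp (δ * m))⁻¹) * ((C₀⁻¹ * Real.exp (δ * m)) * ‖matL (iterZ M 0 m) xs‖) := by
          field_simp
          try ring
      _ ≤ (C₀ * (Real.exp (δ * m))⁻¹) * ‖xs‖ := h2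
  -- backward contraction of xu
  have hBxu : ‖matL ((iterZ M (0 - (m:ℤ)) m)⁻¹) xu‖ ≤ (C₀ * (Real.exp (δ * m))⁻¹) * ‖xu‖ := by
    have hFdet := S14Aux.iterZ_det M hM (0 - (m:ℤ)) m
    have hmap := S14Aux.map_iterZ M Eu hinvu (0 - (m:ℤ)) m
    have hzero : ((0:ℤ) - (m:ℕ) + (m:ℕ)) = 0 := by ring
    rw [hzero] at hmap
    have hxu' : xu ∈ (Eu (0 - (m:ℤ))).map (matL (iterZ M (0 - (m:ℤ)) m)) := by
      rw [hmap]; exact hxu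
    obtain ⟨w, hwmem, hweq⟩ := hxu'
    have hBw : matL ((iterZ M (0 - (m:ℤ)) m)⁻¹) xu = w := by
      rw [← hweq, S14Aux.matL_inv_apply _ hFdet]
    have hlow : (C₀⁻¹ * Real.exp (δ * m)) * ‖w‖ ≤ ‖xu‖ := by
      have h := S14Aux.lower_scaled (matL (iterZ M (0 - (m:ℤ)) m))
        (C₀⁻¹ * Real.exp (δ * m)) hclow hwmem
        (fun ξ h1 h2 => (hbd (0 - (m:ℤ)) m hm ξ h1).2.1 h2)
      rwa [hweq] at h
    have h2 := mul_le_mul_of_nonneg_left hlow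
      (by positivity : (0:ℝ) ≤ C₀ * (Real.exp (δ * m))⁻¹)
    rw [hBw]
    calc ‖w‖ = (C₀ * (Real.exp (δ * m))⁻¹) * ((C₀⁻¹ * Real.exp (δ * m)) * ‖w‖) := by
          field_simp
          try ring
      _ ≤ (C₀ * (Real.exp (δ * m))⁻¹) * ‖xu‖ := h2
  -- triangle inequalities
  have htriA : ‖matL (iterZ M 0 m) xu‖ ≤
      ‖matL (iterZ M 0 m) x‖ + ‖matL (iterZ M 0 m) xs‖ + ‖matL (iterZ M 0 m) xc‖ := by
    have hdecomp : matL (iterZ M 0 m) xu =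
        matL (iterZ M 0 m) x - matL (iterZ M 0 m) xs - matL (iterZ M 0 m) xc := by
      rw [hx, map_add, map_add]; abel
    rw [hdecomp]
    calc ‖matL (iterZ M 0 m) x - matL (iterZ M 0 m) xs - matL (iterZ M 0 m) xc‖
        ≤ ‖matL (iterZ M 0 m) x - matL (iterZ M 0 m) xs‖ + ‖matL (iterZ M 0 m) xc‖ :=
          norm_sub_le _ _
      _ ≤ ‖matL (iterZ M 0 m) x‖ + ‖matL (iterZ M 0 m) xs‖ + ‖matL (iterZ M 0 m) xc‖ := by
          have := norm_sub_le (matL (iterZ M 0 m) x) (matL (iterZ M 0 m) xs)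
          linarith
  have htriB : ‖matL ((iterZ M (0 - (m:ℤ)) m)⁻¹) xs‖ ≤
      ‖matL ((iterZ M (0 - (m:ℤ)) m)⁻¹) x‖ + ‖matL ((iterZ M (0 - (m:ℤ)) m)⁻¹) xu‖ +
      ‖matL ((iterZ M (0 - (m:ℤ)) m)⁻¹) xc‖ := by
    have hdecomp : matL ((iterZ M (0 - (m:ℤ)) m)⁻¹) xs =
        matL ((iterZ M (0 - (m:ℤ)) m)⁻¹) x - matL ((iterZ M (0 - (m:ℤ)) m)⁻¹) xu -
        matL ((iterZ M (0 - (m:ℤ)) m)⁻¹) xc := by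
      rw [hx, map_add, map_add]; abel
    rw [hdecomp]
    calc ‖matL ((iterZ M (0 - (m:ℤ)) m)⁻¹) x - matL ((iterZ M (0 - (m:ℤ)) m)⁻¹) xu -
          matL ((iterZ M (0 - (m:ℤ)) m)⁻¹) xc‖
        ≤ ‖matL ((iterZ M (0 - (m:ℤ)) m)⁻¹) x - matL ((iterZ M (0 - (m:ℤ)) m)⁻¹) xu‖ +
          ‖matL ((iterZ M (0 - (m:ℤ)) m)⁻¹) xc‖ := norm_sub_le _ _
      _ ≤ _ := by
          have := norm_sub_le (matL ((iterZ M (0 - (m:ℤ)) m)⁻¹) x)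
            (matL ((iterZ M (0 - (m:ℤ)) m)⁻¹) xu)
          linarith
  -- lower bounds without inverses
  have hAxu' : Real.exp (δ * m) * ‖xu‖ ≤ C₀ * ‖matL (iterZ M 0 m) xu‖ := by
    have h2 := mul_le_mul_of_nonneg_left hAxu hC₀pos.le
    calc Real.exp (δ * m) * ‖xu‖ = C₀ * ((C₀⁻¹ * Real.exp (δ * m)) * ‖xu‖) := by
          field_simp
          try ring
      _ ≤ C₀ * ‖matL (iterZ M 0 m) xu‖ := h2
  have hBxs' : Real.exp (δ * m) * ‖xs‖ ≤ C₀ * ‖matL ((iterZ M (0 - (m:ℤ)) m)⁻¹) xs‖ := by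
    have h2 := mul_le_mul_of_nonneg_left hBxs hC₀pos.le
    calc Real.exp (δ * m) * ‖xs‖ = C₀ * ((C₀⁻¹ * Real.exp (δ * m)) * ‖xs‖) := by
          field_simp
          try ring
      _ ≤ C₀ * ‖matL ((iterZ M (0 - (m:ℤ)) m)⁻¹) xs‖ := h2
  have hexp : Real.exp (-(δ - δ') * m) = Real.exp (δ' * m) / Real.exp (δ * m) := by
    rw [← Real.exp_sub]; congr 1; ring
  constructor
  · rw [hexp, show C₀ ^ 2 * (1 + ‖xc‖ + ‖xu‖) * (Real.exp (δ' * m) / Real.exp (δ * m)) =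
      C₀ ^ 2 * (1 + ‖xc‖ + ‖xu‖) * Real.exp (δ' * m) / Real.exp (δ * m) by ring,
      le_div_iff₀ hEpos]
    calc ‖xs‖ * Real.exp (δ * m) = Real.exp (δ * m) * ‖xs‖ := mul_comm _ _
      _ ≤ C₀ * ‖matL ((iterZ M (0 - (m:ℤ)) m)⁻¹) xs‖ := hBxs'
      _ ≤ C₀ * (‖matL ((iterZ M (0 - (m:ℤ)) m)⁻¹) x‖ + ‖matL ((iterZ M (0 - (m:ℤ)) m)⁻¹) xu‖ +
          ‖matL ((iterZ M (0 - (m:ℤ)) m)⁻¹) xc‖) := by gcongr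
      _ ≤ C₀ * (C₀ * Real.exp (δ' * m) + (C₀ * (Real.exp (δ * m))⁻¹) * ‖xu‖ +
          (C₀ * Real.exp (δ' * m)) * ‖xc‖) := by gcongr
      _ ≤ C₀ * (C₀ * Real.exp (δ' * m) + (C₀ * Real.exp (δ' * m)) * ‖xu‖ +
          (C₀ * Real.exp (δ' * m)) * ‖xc‖) := by gcongr
      _ = C₀ ^ 2 * (1 + ‖xc‖ + ‖xu‖) * Real.exp (δ' * m) := by ring
  · rw [hexp, show C₀ ^ 2 * (1 + ‖xc‖ + ‖xs‖) * (Real.exp (δ' * m) / Real.exp (δ * m)) =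
      C₀ ^ 2 * (1 + ‖xc‖ + ‖xs‖) * Real.exp (δ' * m) / Real.exp (δ * m) by ring,
      le_div_iff₀ hEpos]
    calc ‖xu‖ * Real.exp (δ * m) = Real.exp (δ * m) * ‖xu‖ := mul_comm _ _
      _ ≤ C₀ * ‖matL (iterZ M 0 m) xu‖ := hAxu'
      _ ≤ C₀ * (‖matL (iterZ M 0 m) x‖ + ‖matL (iterZ M 0 m) xs‖ +
          ‖matL (iterZ M 0 m) xc‖) := by gcongr
      _ ≤ C₀ * (C₀ * Real.exp (δ' * m) + (C₀ * (Real.exp (δ * m))⁻¹) * ‖xs‖ +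
          (C₀ * Real.exp (δ' * m)) * ‖xc‖) := by gcongr
      _ ≤ C₀ * (C₀ * Real.exp (δ' * m) + (C₀ * Real.exp (δ' * m)) * ‖xs‖ +
          (C₀ * Real.exp (δ' * m)) * ‖xc‖) := by gcongr
      _ = C₀ ^ 2 * (1 + ‖xc‖ + ‖xs‖) * Real.exp (δ' * m) := by ring
end
end
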